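/- arXiv:2406.19303 — 3 statements merged into one kernel-verified Lean document; each statement's English description precedes it below -/
import Mathlib

section
/- Let n ≥ 4 and set w = s_0 ∘ [2,n−1] ∘ [1,n−2] ∘ s_n on the affine root lattice of type D_n^{(1)}. Then: w(α_0) = α_0 + α_1 + 2α_2 + α_3; w(α_j) = α_{j+2} for 1 ≤ j ≤ n−3; w(α_{n−1}) = α_1; w(α_{n−2}) = α_0 + α_2 + ⋯ + α_{n−2} + α_n; and w(α_n) = −θ − 2α_0, where θ = α_1 + α_{n−1} + α_n + 2(α_2 + ⋯ + α_{n−2}). -/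
/-!
The nodes `1, …, n−1` of the affine diagram form a path, i.e. a subdiagram of type `A`. On an
interval `[k, l]` of a path the product `[k, l] = s_k ⋯ s_l` shifts `α_m ↦ α_{m+1}` for
`k ≤ m < l`, sends `α_l` to `−(α_k + ⋯ + α_l)`, and adds `α_k` (resp. `α_k + ⋯ + α_l`) to a
simple root joined to the interval only at its first (resp. last) node. Every `w(α_j)` then
follows by linearity.
-/

noncomputable section

open Finset

/-- The basis vector `α_k` of the affine root lattice `V = ℤ^{n+1}` (indices `0 ≤ k ≤ n`). -/
def al (n k : ℕ) : Fin (n + 1) → ℤ := fun m => if (m : ℕ) = k then 1 else 0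

/-- The affine Cartan matrix of type `D_n^{(1)}`: `a_{jj} = 2`; `a_{jk} = a_{kj} = −1` when
the nodes `j, k` are adjacent in the affine Dynkin diagram of `D_n^{(1)}`
(adjacent pairs `{0,2}`, `{1,2}`, `{j,j+1}` for `2 ≤ j ≤ n−2`, and `{n−2,n}`);
`a_{jk} = 0` otherwise. -/
def aD (n j k : ℕ) : ℤ :=
  if j = k then 2
  else if (j = 0 ∧ k = 2) ∨ (j = 2 ∧ k = 0) ∨ (j = 1 ∧ k = 2) ∨ (j = 2 ∧ k = 1)
      ∨ (2 ≤ j ∧ j ≤ n - 2 ∧ k = j + 1) ∨ (2 ≤ k ∧ k ≤ n - 2 ∧ j = k + 1)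
      ∨ (j = n - 2 ∧ k = n) ∨ (j = n ∧ k = n - 2) then -1
  else 0

/-- The simple reflection `s_i` on the affine root lattice of type `D_n^{(1)}`:
the ℤ-linear map determined by `s_i(α_j) = α_j − a_{ji} α_i`. -/
def sD (n i : ℕ) (x : Fin (n + 1) → ℤ) : Fin (n + 1) → ℤ :=
  fun m => x m - (∑ j : Fin (n + 1), aD n (j : ℕ) i * x j) * (if (m : ℕ) = i then 1 else 0)

/-- The block `[k,l] = s_k ∘ s_{k+1} ∘ ⋯ ∘ s_l` (rightmost factor applied first). -/
def blkD (n k l : ℕ) : (Fin (n + 1) → ℤ) → (Fin (n + 1) → ℤ) :=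
  (List.range' k (l + 1 - k)).foldr (fun j f => sD n j ∘ f) id

lemma sum_Icc_eq_add_sum_Icc_succ {M : Type*} [AddCommMonoid M] (f : ℕ → M) {a b : ℕ}
    (h : a ≤ b) : ∑ i ∈ Icc a b, f i = f a + ∑ i ∈ Icc (a + 1) b, f i := by
  rw [Icc_add_one_left_eq_Ioc, add_sum_Ioc_eq_sum_Icc h]

section

variable {n : ℕ}

/-- `corootPairing A n i v = ⟨v, α_i^∨⟩`, with the convention `⟨α_j, α_i^∨⟩ = A j i`. -/
def corootPairing (A : ℕ → ℕ → ℤ) (n i : ℕ) : Module.Dual ℤ (Fin (n + 1) → ℤ) :=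
  ∑ j : Fin (n + 1), A j i • LinearMap.proj j

def simpleReflection (A : ℕ → ℕ → ℤ) (n i : ℕ) : Module.End ℤ (Fin (n + 1) → ℤ) :=
  Module.preReflection (al n i) (corootPairing A n i)

/-- The block `[k, l] = s_k ⋯ s_l` as an endomorphism; it is `1` when `l < k`. -/
def reflectionChain (A : ℕ → ℕ → ℤ) (n k l : ℕ) : Module.End ℤ (Fin (n + 1) → ℤ) :=
  ((List.range' k (l + 1 - k)).map (simpleReflection A n)).prod

section Reflections

variable {A : ℕ → ℕ → ℤ}

lemma corootPairing_apply (i : ℕ) (v : Fin (n + 1) → ℤ) :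
    corootPairing A n i v = ∑ j : Fin (n + 1), A j i * v j := by
  simp [corootPairing]

lemma corootPairing_al {k : ℕ} (hk : k ≤ n) (i : ℕ) : corootPairing A n i (al n k) = A k i := by
  rw [corootPairing_apply, Finset.sum_eq_single ⟨k, Nat.lt_succ_of_le hk⟩]
  · simp [al]
  · intro j _ hj
    simp [al, Fin.val_ne_iff.2 hj]
  · simp

lemma corootPairing_sum_al {s : Finset ℕ} (hs : ∀ k ∈ s, k ≤ n) (i : ℕ) :
    corootPairing A n i (∑ k ∈ s, al n k) = ∑ k ∈ s, A k i := by
  rw [map_sum]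
  exact Finset.sum_congr rfl fun k hk => corootPairing_al (hs k hk) i

lemma simpleReflection_apply (i : ℕ) (v : Fin (n + 1) → ℤ) :
    simpleReflection A n i v = v - corootPairing A n i v • al n i :=
  Module.preReflection_apply _ _ _

lemma simpleReflection_al {k : ℕ} (hk : k ≤ n) (i : ℕ) :
    simpleReflection A n i (al n k) = al n k - A k i • al n i := by
  rw [simpleReflection_apply, corootPairing_al hk]

lemma simpleReflection_al_self {i : ℕ} (hi : i ≤ n) (hA : A i i = 2) :
    simpleReflection A n i (al n i) = -al n i := by
  rw [simpleReflection_al hi, hA]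
  module

lemma simpleReflection_al_of_eq_zero {k i : ℕ} (hk : k ≤ n) (hA : A k i = 0) :
    simpleReflection A n i (al n k) = al n k := by
  rw [simpleReflection_al hk, hA, zero_smul, sub_zero]

lemma simpleReflection_al_of_eq_neg_one {k i : ℕ} (hk : k ≤ n) (hA : A k i = -1) :
    simpleReflection A n i (al n k) = al n k + al n i := by
  rw [simpleReflection_al hk, hA, neg_one_smul, sub_neg_eq_add]

lemma simpleReflection_sum_Icc {a b m i : ℕ} (hb : b ≤ n) (hm : m ∈ Icc a b) (hAm : A m i = -1)
    (hA : ∀ j ∈ Icc a b, j ≠ m → A j i = 0) :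
    simpleReflection A n i (∑ j ∈ Icc a b, al n j) = ∑ j ∈ Icc a b, al n j + al n i := by
  rw [simpleReflection_apply, corootPairing_sum_al (fun j hj => (mem_Icc.1 hj).2.trans hb),
    Finset.sum_eq_single_of_mem m hm hA, hAm, neg_one_smul, sub_neg_eq_add]

end Reflections

lemma sD_eq_simpleReflection (i : ℕ) : sD n i = simpleReflection (aD n) n i := by
  ext v m
  rw [simpleReflection_apply, corootPairing_apply]
  simp [sD, al]

lemma blkD_eq_reflectionChain (k l : ℕ) : blkD n k l = reflectionChain (aD n) n k l := by
  rw [blkD, reflectionChain]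
  induction List.range' k (l + 1 - k) with
  | nil => rfl
  | cons j L ih =>
    rw [List.foldr_cons, ih, List.map_cons, List.prod_cons, Module.End.coe_mul,
      sD_eq_simpleReflection]

/-- The nodes `k, k+1, …, l` span a subdiagram of type `A`, each joined to the next by a simple
edge. -/
def IsPathOn (A : ℕ → ℕ → ℤ) (k l : ℕ) : Prop :=
  ∀ i ∈ Icc k l, ∀ j ∈ Icc k l,
    A i j = if i = j then 2 else if i + 1 = j ∨ j + 1 = i then -1 else 0

section Chains

variable {A : ℕ → ℕ → ℤ} {k l : ℕ}

namespace IsPathOn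

lemma mono {k' l' : ℕ} (h : IsPathOn A k l) (hk : k ≤ k') (hl : l' ≤ l) : IsPathOn A k' l' :=
  fun i hi j hj => h i (Icc_subset_Icc hk hl hi) j (Icc_subset_Icc hk hl hj)

lemma diag (h : IsPathOn A k l) {i : ℕ} (hi : i ∈ Icc k l) : A i i = 2 := by
  rw [h i hi i hi, if_pos rfl]

lemma succ_left (h : IsPathOn A k l) {i : ℕ} (hki : k ≤ i) (hil : i < l) : A i (i + 1) = -1 := by
  rw [h i (mem_Icc.2 ⟨hki, hil.le⟩) (i + 1) (mem_Icc.2 ⟨by omega, hil⟩)]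
  simp

lemma succ_right (h : IsPathOn A k l) {i : ℕ} (hki : k ≤ i) (hil : i < l) :
    A (i + 1) i = -1 := by
  rw [h (i + 1) (mem_Icc.2 ⟨by omega, hil⟩) i (mem_Icc.2 ⟨hki, hil.le⟩)]
  simp

lemma eq_zero (h : IsPathOn A k l) {i j : ℕ} (hi : i ∈ Icc k l) (hj : j ∈ Icc k l)
    (hij : i + 1 < j ∨ j + 1 < i) : A i j = 0 := by
  rw [h i hi j hj, if_neg (by omega), if_neg (by omega)]

end IsPathOn

lemma reflectionChain_of_lt (h : l < k) : reflectionChain A n k l = 1 := by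
  rw [reflectionChain, Nat.sub_eq_zero_of_le h, List.range'_zero, List.map_nil, List.prod_nil]

lemma reflectionChain_eq_mul (h : k ≤ l) :
    reflectionChain A n k l = simpleReflection A n k * reflectionChain A n (k + 1) l := by
  rw [reflectionChain, reflectionChain, show l + 1 - k = l + 1 - (k + 1) + 1 by omega,
    List.range'_succ, List.map_cons, List.prod_cons]

lemma reflectionChain_succ (h : k ≤ l + 1) :
    reflectionChain A n k (l + 1) = reflectionChain A n k l * simpleReflection A n (l + 1) := by
  rw [reflectionChain, reflectionChain, show l + 1 + 1 - k = l + 1 - k + 1 by omega,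
    List.range'_concat, List.map_append, List.prod_append,
    show k + 1 * (l + 1 - k) = l + 1 by omega]
  simp

lemma reflectionChain_self : reflectionChain A n k k = simpleReflection A n k := by
  rw [reflectionChain_eq_mul le_rfl, reflectionChain_of_lt (Nat.lt_succ_self k), mul_one]

lemma reflectionChain_apply_of_forall {v : Fin (n + 1) → ℤ}
    (h : ∀ i ∈ Icc k l, corootPairing A n i v = 0) : reflectionChain A n k l v = v := by
  suffices ∀ L : List ℕ, (∀ i ∈ L, corootPairing A n i v = 0) →
      (L.map (simpleReflection A n)).prod v = v from
    this _ fun i hi => h i (mem_Icc.2 (by rw [List.mem_range'_1] at hi; omega))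
  intro L hL
  induction L with
  | nil => rfl
  | cons j L ih =>
    rw [List.map_cons, List.prod_cons, Module.End.mul_apply,
      ih fun i hi => hL i (List.mem_cons_of_mem j hi), simpleReflection_apply,
      hL j List.mem_cons_self, zero_smul, sub_zero]

lemma reflectionChain_al_of_forall {p : ℕ} (hp : p ≤ n) (h : ∀ i ∈ Icc k l, A p i = 0) :
    reflectionChain A n k l (al n p) = al n p :=
  reflectionChain_apply_of_forall fun i hi => by rw [corootPairing_al hp, h i hi]

lemma reflectionChain_al_of_head {p : ℕ} (hp : p ≤ n) (hkl : k ≤ l) (hpk : A p k = -1)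
    (h : ∀ i ∈ Ioc k l, A p i = 0) :
    reflectionChain A n k l (al n p) = al n p + al n k := by
  rw [reflectionChain_eq_mul hkl, Module.End.mul_apply,
    reflectionChain_al_of_forall hp fun i hi => h i (by rw [← Icc_add_one_left_eq_Ioc]; exact hi),
    simpleReflection_al_of_eq_neg_one hp hpk]

namespace IsPathOn

lemma reflectionChain_al (hP : IsPathOn A k l) (hl : l ≤ n) {m : ℕ} (hkm : k ≤ m) (hml : m < l) :
    reflectionChain A n k l (al n m) = al n (m + 1) := by
  obtain ⟨d, rfl⟩ := Nat.exists_eq_add_of_le hkm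
  induction d generalizing k with
  | zero =>
    rw [add_zero] at hml ⊢
    rw [reflectionChain_eq_mul hml.le, Module.End.mul_apply,
      reflectionChain_al_of_head (by omega) hml (hP.succ_left le_rfl hml) fun i hi => by
        rw [mem_Ioc] at hi
        exact hP.eq_zero (mem_Icc.2 (by omega)) (mem_Icc.2 (by omega)) (by omega),
      map_add, simpleReflection_al_self (by omega) (hP.diag (mem_Icc.2 (by omega))),
      simpleReflection_al_of_eq_neg_one (by omega) (hP.succ_right le_rfl hml)]
    abel
  | succ d ih =>
    rw [reflectionChain_eq_mul (by omega), Module.End.mul_apply, ← add_comm 1 d, ← add_assoc,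
      ih (hP.mono (by omega) le_rfl) (by omega) (by omega),
      simpleReflection_al_of_eq_zero (by omega)
        (hP.eq_zero (mem_Icc.2 (by omega)) (mem_Icc.2 (by omega)) (by omega))]

lemma reflectionChain_sum_Icc (hP : IsPathOn A k l) (hl : l ≤ n) {a b : ℕ} (hka : k ≤ a)
    (hbl : b < l) :
    reflectionChain A n k l (∑ i ∈ Icc a b, al n i) = ∑ i ∈ Icc (a + 1) (b + 1), al n i := by
  rw [map_sum, Finset.sum_congr rfl fun i hi =>
    hP.reflectionChain_al hl (hka.trans (mem_Icc.1 hi).1) ((mem_Icc.1 hi).2.trans_lt hbl),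
    ← map_add_right_Icc, sum_map]
  rfl

lemma reflectionChain_al_of_tail (hP : IsPathOn A k l) (hl : l ≤ n) {p : ℕ} (hp : p ≤ n)
    (hkl : k ≤ l) (hpl : A p l = -1) (h : ∀ i ∈ Ico k l, A p i = 0) :
    reflectionChain A n k l (al n p) = al n p + ∑ i ∈ Icc k l, al n i := by
  obtain ⟨d, rfl⟩ := Nat.exists_eq_add_of_le hkl
  induction d generalizing k with
  | zero =>
    rw [add_zero] at hpl ⊢
    rw [reflectionChain_self, Icc_self, sum_singleton, simpleReflection_al_of_eq_neg_one hp hpl]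
  | succ d ih =>
    rw [reflectionChain_eq_mul hkl, Module.End.mul_apply]
    rw [show k + (d + 1) = k + 1 + d by omega] at *
    rw [ih (hP.mono (by omega) le_rfl) hl (by omega) hpl
        fun i hi => h i (Ico_subset_Ico_left (by omega) hi),
      map_add, simpleReflection_al_of_eq_zero hp (h k (mem_Ico.2 ⟨le_rfl, by omega⟩)),
      simpleReflection_sum_Icc hl (mem_Icc.2 (by omega)) (hP.succ_right le_rfl (by omega))
        fun j hj hjk => by
          rw [mem_Icc] at hj
          exact hP.eq_zero (mem_Icc.2 (by omega)) (mem_Icc.2 (by omega)) (by omega),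
      sum_Icc_eq_add_sum_Icc_succ _ hkl]
    abel

lemma reflectionChain_al_right (hP : IsPathOn A k l) (hl : l ≤ n) (hkl : k ≤ l) :
    reflectionChain A n k l (al n l) = -∑ i ∈ Icc k l, al n i := by
  rcases hkl.eq_or_lt with rfl | hlt
  · rw [reflectionChain_self, Icc_self, sum_singleton,
      simpleReflection_al_self hl (hP.diag (mem_Icc.2 ⟨le_rfl, le_rfl⟩))]
  obtain ⟨m, rfl⟩ := Nat.exists_eq_add_one_of_ne_zero (Nat.ne_zero_of_lt hlt)
  rw [reflectionChain_succ hlt.le, Module.End.mul_apply,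
    simpleReflection_al_self hl (hP.diag (mem_Icc.2 ⟨hlt.le, le_rfl⟩)), map_neg,
    (hP.mono le_rfl m.le_succ).reflectionChain_al_of_tail (by omega) hl (by omega)
      (hP.succ_right (by omega) (by omega)) fun i hi => by
        rw [mem_Ico] at hi
        exact hP.eq_zero (mem_Icc.2 (by omega)) (mem_Icc.2 (by omega)) (by omega),
    sum_Icc_succ_top (by omega)]
  abel

end IsPathOn

end Chains

lemma isPathOn_aD : IsPathOn (aD n) 1 (n - 1) := by
  intro i hi j hj
  simp only [mem_Icc] at hi hj
  unfold aD
  split_ifs <;> omega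

def wD (n : ℕ) : Module.End ℤ (Fin (n + 1) → ℤ) :=
  simpleReflection (aD n) n 0 * reflectionChain (aD n) n 2 (n - 1) *
    reflectionChain (aD n) n 1 (n - 2) * simpleReflection (aD n) n n

lemma coe_wD : ⇑(wD n) = sD n 0 ∘ blkD n 2 (n - 1) ∘ blkD n 1 (n - 2) ∘ sD n n := by
  simp only [wD, Module.End.coe_mul, sD_eq_simpleReflection, blkD_eq_reflectionChain,
    Function.comp_assoc]

lemma wD_apply (v : Fin (n + 1) → ℤ) :
    wD n v = simpleReflection (aD n) n 0 (reflectionChain (aD n) n 2 (n - 1)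
      (reflectionChain (aD n) n 1 (n - 2) (simpleReflection (aD n) n n v))) := by
  simp only [wD, Module.End.mul_apply]

lemma reflectionChain_aD_one_al_self (hn : 4 ≤ n) :
    reflectionChain (aD n) n 1 (n - 2) (al n n) = al n n + ∑ i ∈ Icc 1 (n - 2), al n i :=
  (isPathOn_aD.mono le_rfl (by omega)).reflectionChain_al_of_tail (by omega) le_rfl (by omega)
    (by unfold aD; grind) fun i hi => by unfold aD; grind

lemma reflectionChain_aD_two_al_self (hn : 4 ≤ n) :
    reflectionChain (aD n) n 2 (n - 1) (al n n) = al n n + ∑ i ∈ Icc 2 (n - 2), al n i := by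
  rw [show n - 1 = n - 2 + 1 by omega, reflectionChain_succ (by omega), Module.End.mul_apply,
    simpleReflection_al_of_eq_zero le_rfl (by unfold aD; grind),
    (isPathOn_aD.mono (by omega) (by omega)).reflectionChain_al_of_tail (by omega) le_rfl
      (by omega) (by unfold aD; grind) fun i hi => by unfold aD; grind]

lemma simpleReflection_aD_zero_sum_Icc (hn : 4 ≤ n) :
    simpleReflection (aD n) n 0 (∑ i ∈ Icc 2 (n - 2), al n i)
      = ∑ i ∈ Icc 2 (n - 2), al n i + al n 0 :=
  simpleReflection_sum_Icc (m := 2) (by omega) (mem_Icc.2 ⟨le_rfl, by omega⟩)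
    (by unfold aD; grind) fun j hj hj2 => by unfold aD; grind

lemma wD_al_zero (hn : 4 ≤ n) :
    wD n (al n 0) = al n 0 + al n 1 + (2 : ℤ) • al n 2 + al n 3 := by
  have h₁ : reflectionChain (aD n) n 1 (n - 2) (al n 0) = al n 0 + al n 1 + al n 2 := by
    rw [reflectionChain_eq_mul (by omega), Module.End.mul_apply,
      reflectionChain_al_of_head (by omega) (by omega) (by unfold aD; grind)
        fun i hi => by unfold aD; grind,
      map_add, simpleReflection_al_of_eq_zero (by omega) (by unfold aD; grind),
      simpleReflection_al_of_eq_neg_one (by omega) (by unfold aD; grind)]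
    abel
  have h₂ : reflectionChain (aD n) n 2 (n - 1) (al n 0 + al n 1 + al n 2)
      = al n 0 + al n 1 + (2 : ℤ) • al n 2 + al n 3 := by
    rw [map_add, map_add,
      reflectionChain_al_of_head (by omega) (by omega) (by unfold aD; grind)
        fun i hi => by unfold aD; grind,
      reflectionChain_al_of_head (by omega) (by omega) (by unfold aD; grind)
        fun i hi => by unfold aD; grind,
      (isPathOn_aD.mono (by omega) le_rfl).reflectionChain_al (by omega) le_rfl (by omega)]
    module
  rw [wD_apply, simpleReflection_al_of_eq_zero (by omega) (by unfold aD; grind), h₁, h₂]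
  simp only [map_add, map_zsmul]
  rw [simpleReflection_al_self (by omega) (by unfold aD; grind),
    simpleReflection_al_of_eq_zero (by omega) (by unfold aD; grind),
    simpleReflection_al_of_eq_neg_one (by omega) (by unfold aD; grind),
    simpleReflection_al_of_eq_zero (by omega) (by unfold aD; grind)]
  module

lemma wD_al_of_le_sub_three (hn : 4 ≤ n) {j : ℕ} (hj₁ : 1 ≤ j) (hj₂ : j ≤ n - 3) :
    wD n (al n j) = al n (j + 2) := by
  rw [wD_apply, simpleReflection_al_of_eq_zero (by omega) (by unfold aD; grind),
    (isPathOn_aD.mono le_rfl (by omega)).reflectionChain_al (by omega) hj₁ (by omega),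
    (isPathOn_aD.mono (by omega) le_rfl).reflectionChain_al (by omega) (by omega) (by omega),
    simpleReflection_al_of_eq_zero (by omega) (by unfold aD; grind)]

lemma wD_al_sub_one (hn : 4 ≤ n) : wD n (al n (n - 1)) = al n 1 := by
  have hP : IsPathOn (aD n) 2 (n - 1) := isPathOn_aD.mono (by omega) le_rfl
  have hchain : reflectionChain (aD n) n 2 (n - 1)
      (reflectionChain (aD n) n 1 (n - 2) (al n (n - 1))) = al n 1 := by
    rw [(isPathOn_aD.mono le_rfl (by omega)).reflectionChain_al_of_tail (by omega) (by omega)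
        (by omega) (by unfold aD; grind) fun i hi => by unfold aD; grind,
      sum_Icc_eq_add_sum_Icc_succ _ (show 1 ≤ n - 2 by omega), map_add, map_add,
      hP.reflectionChain_al_right (by omega) (by omega),
      reflectionChain_al_of_head (by omega) (by omega) (by unfold aD; grind)
        fun i hi => by unfold aD; grind,
      hP.reflectionChain_sum_Icc (by omega) le_rfl (by omega), show n - 2 + 1 = n - 1 by omega,
      sum_Icc_eq_add_sum_Icc_succ _ (show 2 ≤ n - 1 by omega)]
    abel
  rw [wD_apply, simpleReflection_al_of_eq_zero (by omega) (by unfold aD; grind), hchain,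
    simpleReflection_al_of_eq_zero (by omega) (by unfold aD; grind)]

lemma wD_al_sub_two (hn : 4 ≤ n) :
    wD n (al n (n - 2)) = al n 0 + ∑ i ∈ Icc 2 (n - 2), al n i + al n n := by
  rw [wD_apply, simpleReflection_al_of_eq_neg_one (by omega) (by unfold aD; grind), map_add,
    (isPathOn_aD.mono le_rfl (by omega)).reflectionChain_al_right (by omega) (by omega),
    reflectionChain_aD_one_al_self hn, add_comm (al n n), neg_add_cancel_left,
    reflectionChain_aD_two_al_self hn,
    map_add, simpleReflection_al_of_eq_zero le_rfl (by unfold aD; grind),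
    simpleReflection_aD_zero_sum_Icc hn]
  abel

lemma wD_al_self (hn : 4 ≤ n) :
    wD n (al n n) = -(al n 1 + al n (n - 1) + al n n + (2 : ℤ) • ∑ i ∈ Icc 2 (n - 2), al n i)
      - (2 : ℤ) • al n 0 := by
  have hP : IsPathOn (aD n) 2 (n - 1) := isPathOn_aD.mono (by omega) le_rfl
  have hθ : reflectionChain (aD n) n 2 (n - 1) (reflectionChain (aD n) n 1 (n - 2) (al n n))
      = al n 1 + al n (n - 1) + al n n + (2 : ℤ) • ∑ i ∈ Icc 2 (n - 2), al n i := by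
    rw [reflectionChain_aD_one_al_self hn, sum_Icc_eq_add_sum_Icc_succ _ (show 1 ≤ n - 2 by omega),
      map_add, map_add,
      reflectionChain_aD_two_al_self hn,
      reflectionChain_al_of_head (by omega) (by omega) (by unfold aD; grind)
        fun i hi => by unfold aD; grind,
      hP.reflectionChain_sum_Icc (by omega) le_rfl (by omega), show n - 2 + 1 = n - 1 by omega]
    have hsum : al n 2 + ∑ i ∈ Icc 3 (n - 1), al n i
        = ∑ i ∈ Icc 2 (n - 2), al n i + al n (n - 1) := by
      rw [show (3 : ℕ) = 2 + 1 from rfl, ← sum_Icc_eq_add_sum_Icc_succ _ (by omega),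
        show n - 1 = n - 2 + 1 by omega, sum_Icc_succ_top (by omega)]
    rw [add_assoc (al n 1), hsum]
    module
  rw [wD_apply, simpleReflection_al_self le_rfl (by unfold aD; grind), map_neg, map_neg, hθ,
    map_neg]
  simp only [map_add, map_zsmul]
  rw [simpleReflection_aD_zero_sum_Icc hn,
    simpleReflection_al_of_eq_zero (by omega) (by unfold aD; grind),
    simpleReflection_al_of_eq_zero (by omega) (by unfold aD; grind),
    simpleReflection_al_of_eq_zero le_rfl (by unfold aD; grind)]
  module

end

/-- Action of `w = s₀ ∘ [2,n−1] ∘ [1,n−2] ∘ sₙ` on the simple roots of type `D_n^{(1)}`. -/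
theorem statement9 (n : ℕ) (hn : 4 ≤ n) :
    (sD n 0 ∘ blkD n 2 (n - 1) ∘ blkD n 1 (n - 2) ∘ sD n n) (al n 0)
        = al n 0 + al n 1 + (2 : ℤ) • al n 2 + al n 3
    ∧ (∀ j, 1 ≤ j → j ≤ n - 3 →
        (sD n 0 ∘ blkD n 2 (n - 1) ∘ blkD n 1 (n - 2) ∘ sD n n) (al n j) = al n (j + 2))
    ∧ (sD n 0 ∘ blkD n 2 (n - 1) ∘ blkD n 1 (n - 2) ∘ sD n n) (al n (n - 1)) = al n 1
    ∧ (sD n 0 ∘ blkD n 2 (n - 1) ∘ blkD n 1 (n - 2) ∘ sD n n) (al n (n - 2))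
        = al n 0 + (∑ j ∈ Icc 2 (n - 2), al n j) + al n n
    ∧ (sD n 0 ∘ blkD n 2 (n - 1) ∘ blkD n 1 (n - 2) ∘ sD n n) (al n n)
        = -(al n 1 + al n (n - 1) + al n n + (2 : ℤ) • ∑ j ∈ Icc 2 (n - 2), al n j)
          - (2 : ℤ) • al n 0 := by
  rw [← coe_wD]
  exact ⟨wD_al_zero hn, fun _ hj₁ hj₂ => wD_al_of_le_sub_three hn hj₁ hj₂, wD_al_sub_one hn,
    wD_al_sub_two hn, wD_al_self hn⟩

end
end

section
/- Let n ≥ 4, let π_1 : V → V be the ℤ-linear map with π_1(α_0) = α_1, π_1(α_1) = α_0 and π_1(α_j) = α_j for 2 ≤ j ≤ n, and set u = π_1 ∘ [1,n−2] ∘ s_n on the affine root lattice of type D_n^{(1)}. Then: u(α_0) = α_0 + α_1 + α_2; u(α_j) = α_{j+1} for 1 ≤ j ≤ n−3; u(α_{n−1}) = α_0 + α_2 + ⋯ + α_{n−2} + α_{n−1}; u(α_{n−2}) = α_n; and u(α_n) = −(α_0 + α_2 + ⋯ + α_{n−2} + α_n). -/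
noncomputable section

open Finset

/-- Value of `x` at natural index `k`, or `0` if out of range. -/
def gv (n : ℕ) (x : Fin (n + 1) → ℤ) (k : ℕ) : ℤ := if h : k < n + 1 then x ⟨k, h⟩ else 0

/-- The diagram automorphism `π₁` of type `D_n^{(1)}`: the ℤ-linear map with
`π₁(α₀) = α₁`, `π₁(α₁) = α₀`, and `π₁(α_j) = α_j` for `2 ≤ j ≤ n`. -/
def pi1 (n : ℕ) (x : Fin (n + 1) → ℤ) : Fin (n + 1) → ℤ :=
  fun m => if (m : ℕ) = 0 then gv n x 1 else if (m : ℕ) = 1 then gv n x 0 else x m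

/- ### auxiliary lemmas -/


lemma sum_coeff (n i t : ℕ) (f : ℕ → ℤ) (ht : t ≤ n) :
    ∑ j : Fin (n+1), f (j:ℕ) * al n t j = f t := by
  rw [Fintype.sum_eq_single (⟨t, by omega⟩ : Fin (n+1))]
  · simp [al]
  · intro j hj
    have : (j:ℕ) ≠ t := fun h => hj (Fin.ext h)
    simp [al, this]

lemma sD_al (n i t : ℕ) (ht : t ≤ n) :
    sD n i (al n t) = al n t - aD n t i • al n i := by
  funext m
  simp only [sD, Pi.sub_apply, Pi.smul_apply, smul_eq_mul]
  rw [sum_coeff n i t (fun j => aD n j i) ht]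
  rfl

def sDh (n i : ℕ) : (Fin (n+1) → ℤ) →+ (Fin (n+1) → ℤ) :=
  AddMonoidHom.mk' (sD n i) (by
    intro x y; funext m
    simp only [sD, Pi.add_apply, mul_add, Finset.sum_add_distrib]
    ring)

lemma sD_add (n i : ℕ) (x y : Fin (n+1) → ℤ) : sD n i (x + y) = sD n i x + sD n i y :=
  map_add (sDh n i) x y

lemma sD_neg (n i : ℕ) (x : Fin (n+1) → ℤ) : sD n i (-x) = -(sD n i x) :=
  map_neg (sDh n i) x

lemma Icc_ins (a b : ℕ) (h : a ≤ b) : Finset.Icc a b = insert a (Finset.Icc (a+1) b) := by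
  ext x; simp; omega

lemma sD_Icc (n k a b : ℕ) (hb : b ≤ n) :
    sD n k (∑ t ∈ Icc a b, al n t)
      = (∑ t ∈ Icc a b, al n t) - (∑ t ∈ Icc a b, aD n t k) • al n k := by
  have h1 : sD n k (∑ t ∈ Icc a b, al n t) = ∑ t ∈ Icc a b, sD n k (al n t) :=
    map_sum (sDh n k) _ _
  rw [h1, Finset.sum_congr rfl (fun t ht => sD_al n k t ((mem_Icc.mp ht).2.trans hb)),
    Finset.sum_sub_distrib, ← Finset.sum_smul]

lemma sum_aD (n k b : ℕ) (hn : 4 ≤ n) (hk1 : 1 ≤ k) (hkb : k + 1 ≤ b) (hb : b ≤ n - 1) :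
    ∑ t ∈ Icc (k+1) b, aD n t k = -1 := by
  rw [Icc_ins _ _ hkb, Finset.sum_insert (by simp)]
  have h1 : aD n (k+1) k = -1 := by rw [aD, if_neg (by omega), if_pos (by omega)]
  have h2 : ∑ t ∈ Icc (k+2) b, aD n t k = 0 :=
    Finset.sum_eq_zero fun t ht => by
      simp only [Finset.mem_Icc] at ht
      rw [aD, if_neg (by omega), if_neg (by omega)]
  rw [h1, h2]; ring

lemma blk_id (n k l : ℕ) (h : l < k) : blkD n k l = id := by
  unfold blkD
  have h0 : l + 1 - k = 0 := by omega
  rw [h0]; rfl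

lemma blk_cons (n k l : ℕ) (h : k ≤ l) : blkD n k l = sD n k ∘ blkD n (k+1) l := by
  unfold blkD
  have h1 : l + 1 - k = (l + 1 - (k+1)) + 1 := by omega
  rw [h1, List.range'_succ]
  rfl

lemma descend (n b : ℕ) (w : ℕ → Fin (n+1) → ℤ)
    (hw : ∀ k, 1 ≤ k → k ≤ b → sD n k (w (k+1)) = w k) :
    ∀ d k, k = b + 1 - d → 1 ≤ k → blkD n k b (w (b+1)) = w k := by
  intro d
  induction d with
  | zero =>
    intro k hk _
    subst hk
    rw [blk_id n _ b (by omega)]; rfl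
  | succ d ih =>
    intro k hk hk1
    by_cases hdb : d + 1 ≤ b
    · by_cases hke : k = b + 1 - d
      · exact ih k hke hk1
      · have hkb : k ≤ b := by omega
        rw [blk_cons n k b hkb]
        have h2 : blkD n (k+1) b (w (b+1)) = w (k+1) := ih (k+1) (by omega) (by omega)
        simp only [Function.comp_apply, h2]
        exact hw k hk1 hkb
    · exact ih k (by omega) hk1

lemma gv_add (n : ℕ) (x y : Fin (n+1) → ℤ) (k : ℕ) : gv n (x+y) k = gv n x k + gv n y k := by
  unfold gv; split <;> simp

def pi1h (n : ℕ) : (Fin (n+1) → ℤ) →+ (Fin (n+1) → ℤ) :=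
  AddMonoidHom.mk' (pi1 n) (by
    intro x y; funext m
    simp only [pi1, gv_add, Pi.add_apply]
    split_ifs <;> simp)

lemma pi1_add (n : ℕ) (x y : Fin (n+1) → ℤ) : pi1 n (x + y) = pi1 n x + pi1 n y :=
  map_add (pi1h n) x y

lemma pi1_neg (n : ℕ) (x : Fin (n+1) → ℤ) : pi1 n (-x) = -(pi1 n x) :=
  map_neg (pi1h n) x

lemma pi1_al0 (n : ℕ) (hn : 1 ≤ n) : pi1 n (al n 0) = al n 1 := by
  funext m; simp only [pi1, gv, al]
  split_ifs <;> simp_all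

lemma pi1_al1 (n : ℕ) (hn : 1 ≤ n) : pi1 n (al n 1) = al n 0 := by
  funext m; simp only [pi1, gv, al]
  split_ifs <;> simp_all

lemma pi1_al2 (n t : ℕ) (ht : 2 ≤ t) : pi1 n (al n t) = al n t := by
  funext m; simp only [pi1, gv, al]
  split_ifs <;> simp_all <;> omega

lemma pi1_S2 (n b : ℕ) : pi1 n (∑ j ∈ Icc 2 b, al n j) = ∑ j ∈ Icc 2 b, al n j := by
  rw [show pi1 n (∑ j ∈ Icc 2 b, al n j) = ∑ j ∈ Icc 2 b, pi1 n (al n j) from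
    map_sum (pi1h n) _ _]
  exact Finset.sum_congr rfl fun t ht => pi1_al2 n t (mem_Icc.mp ht).1

/- ### the five block computations -/

lemma caseA (n : ℕ) (hn : 4 ≤ n) :
    blkD n 1 (n-2) (al n 0) = al n 0 + al n 1 + al n 2 := by
  set w : ℕ → Fin (n+1) → ℤ := fun k =>
    if 3 ≤ k then al n 0 else if k = 2 then al n 0 + al n 2 else al n 0 + al n 1 + al n 2
    with hwdef
  have hw : ∀ k, 1 ≤ k → k ≤ n-2 → sD n k (w (k+1)) = w k := by
    intro k hk1 hk2
    rcases Nat.lt_or_ge k 3 with hk3 | hk3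
    · interval_cases k
      · -- k = 1 : sD 1 (al 0 + al 2) = al 0 + al 1 + al 2
        have e1 : w 2 = al n 0 + al n 2 := by
          rw [hwdef]; beta_reduce; rw [if_neg (by omega), if_pos (by omega)]
        have e2 : w 1 = al n 0 + al n 1 + al n 2 := by
          rw [hwdef]; beta_reduce; rw [if_neg (by omega), if_neg (by omega)]
        rw [e1, e2, sD_add, sD_al n 1 0 (by omega), sD_al n 1 2 (by omega)]
        have a1 : aD n 0 1 = 0 := by rw [aD, if_neg (by omega), if_neg (by omega)]
        have a2 : aD n 2 1 = -1 := by rw [aD, if_neg (by omega), if_pos (by omega)]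
        rw [a1, a2]
        module
      · -- k = 2
        have e1 : w 3 = al n 0 := by rw [hwdef]; beta_reduce; rw [if_pos (by omega)]
        have e2 : w 2 = al n 0 + al n 2 := by
          rw [hwdef]; beta_reduce; rw [if_neg (by omega), if_pos (by omega)]
        rw [e1, e2, sD_al n 2 0 (by omega)]
        have a1 : aD n 0 2 = -1 := by rw [aD, if_neg (by omega), if_pos (by omega)]
        rw [a1]; module
    · have e1 : w (k+1) = al n 0 := by rw [hwdef]; beta_reduce; rw [if_pos (by omega)]
      have e2 : w k = al n 0 := by rw [hwdef]; beta_reduce; rw [if_pos (by omega)]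
      rw [e1, e2, sD_al n k 0 (by omega)]
      have a1 : aD n 0 k = 0 := by rw [aD, if_neg (by omega), if_neg (by omega)]
      rw [a1]; simp
  have hstart : w (n-2+1) = al n 0 := by rw [hwdef]; beta_reduce; rw [if_pos (by omega)]
  have := descend n (n-2) w hw (n-2) 1 (by omega) (by omega)
  rw [hstart] at this
  rw [this]
  rw [hwdef]; beta_reduce; rw [if_neg (by omega), if_neg (by omega)]

lemma caseB (n j : ℕ) (hn : 4 ≤ n) (hj1 : 1 ≤ j) (hj2 : j ≤ n-3) :
    blkD n 1 (n-2) (al n j) = al n (j+1) := by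
  set w : ℕ → Fin (n+1) → ℤ := fun k =>
    if j + 2 ≤ k then al n j else if k = j+1 then al n j + al n (j+1) else al n (j+1)
    with hwdef
  have hw : ∀ k, 1 ≤ k → k ≤ n-2 → sD n k (w (k+1)) = w k := by
    intro k hk1 hk2
    rcases Nat.lt_or_ge k j with hkj | hkj
    · -- k < j
      have e1 : w (k+1) = al n (j+1) := by
        rw [hwdef]; beta_reduce; rw [if_neg (by omega), if_neg (by omega)]
      have e2 : w k = al n (j+1) := by
        rw [hwdef]; beta_reduce; rw [if_neg (by omega), if_neg (by omega)]
      rw [e1, e2, sD_al n k (j+1) (by omega)]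
      have a1 : aD n (j+1) k = 0 := by rw [aD, if_neg (by omega), if_neg (by omega)]
      rw [a1]; simp
    · rcases Nat.lt_or_ge k (j+1) with hkj1 | hkj1
      · -- k = j
        have hkj' : k = j := by omega
        subst hkj'
        have e1 : w (k+1) = al n k + al n (k+1) := by
          rw [hwdef]; beta_reduce; rw [if_neg (by omega), if_pos (by omega)]
        have e2 : w k = al n (k+1) := by
          rw [hwdef]; beta_reduce; rw [if_neg (by omega), if_neg (by omega)]
        rw [e1, e2, sD_add, sD_al n k k (by omega), sD_al n k (k+1) (by omega)]
        have a1 : aD n k k = 2 := by rw [aD, if_pos (by omega)]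
        have a2 : aD n (k+1) k = -1 := by rw [aD, if_neg (by omega), if_pos (by omega)]
        rw [a1, a2]
        module
      · rcases Nat.lt_or_ge k (j+2) with hkj2 | hkj2
        · -- k = j + 1
          have hkj' : k = j+1 := by omega
          subst hkj'
          have e1 : w (j+1+1) = al n j := by rw [hwdef]; beta_reduce; rw [if_pos (by omega)]
          have e2 : w (j+1) = al n j + al n (j+1) := by
            rw [hwdef]; beta_reduce; rw [if_neg (by omega), if_pos (by omega)]
          rw [e1, e2, sD_al n (j+1) j (by omega)]
          have a1 : aD n j (j+1) = -1 := by rw [aD, if_neg (by omega), if_pos (by omega)]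
          rw [a1]; module
        · -- j + 2 ≤ k
          have e1 : w (k+1) = al n j := by rw [hwdef]; beta_reduce; rw [if_pos (by omega)]
          have e2 : w k = al n j := by rw [hwdef]; beta_reduce; rw [if_pos (by omega)]
          rw [e1, e2, sD_al n k j (by omega)]
          have a1 : aD n j k = 0 := by rw [aD, if_neg (by omega), if_neg (by omega)]
          rw [a1]; simp
  have hstart : w (n-2+1) = al n j := by rw [hwdef]; beta_reduce; rw [if_pos (by omega)]
  have := descend n (n-2) w hw (n-2) 1 (by omega) (by omega)
  rw [hstart] at this
  rw [this]
  rw [hwdef]; beta_reduce; rw [if_neg (by omega), if_neg (by omega)]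

lemma caseC (n : ℕ) (hn : 4 ≤ n) :
    blkD n 1 (n-2) (al n (n-1)) = ∑ t ∈ Icc 1 (n-1), al n t := by
  set w : ℕ → Fin (n+1) → ℤ := fun k => ∑ t ∈ Icc k (n-1), al n t with hwdef
  have hw : ∀ k, 1 ≤ k → k ≤ n-2 → sD n k (w (k+1)) = w k := by
    intro k hk1 hk2
    rw [hwdef]
    simp only
    rw [sD_Icc n k (k+1) (n-1) (by omega), sum_aD n k (n-1) hn hk1 (by omega) (by omega)]
    rw [Icc_ins k (n-1) (by omega), Finset.sum_insert (by simp)]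
    module
  have hstart : w (n-2+1) = al n (n-1) := by
    rw [hwdef]
    simp only
    rw [show n-2+1 = n-1 by omega, Finset.Icc_self, Finset.sum_singleton]
  have := descend n (n-2) w hw (n-2) 1 (by omega) (by omega)
  rw [hstart] at this
  rw [this]

lemma caseD (n : ℕ) (hn : 4 ≤ n) :
    blkD n 1 (n-2) (al n (n-2) + al n n) = al n n := by
  set w : ℕ → Fin (n+1) → ℤ := fun k =>
    if k ≤ n-2 then al n n else al n (n-2) + al n n with hwdef
  have hw : ∀ k, 1 ≤ k → k ≤ n-2 → sD n k (w (k+1)) = w k := by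
    intro k hk1 hk2
    rcases Nat.lt_or_ge k (n-2) with hk3 | hk3
    · have e1 : w (k+1) = al n n := by rw [hwdef]; beta_reduce; rw [if_pos (by omega)]
      have e2 : w k = al n n := by rw [hwdef]; beta_reduce; rw [if_pos (by omega)]
      rw [e1, e2, sD_al n k n (by omega)]
      have a1 : aD n n k = 0 := by rw [aD, if_neg (by omega), if_neg (by omega)]
      rw [a1]; simp
    · have hke : k = n-2 := by omega
      subst hke
      have e1 : w (n-2+1) = al n (n-2) + al n n := by
        rw [hwdef]; beta_reduce; rw [if_neg (by omega)]
      have e2 : w (n-2) = al n n := by rw [hwdef]; beta_reduce; rw [if_pos (by omega)]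
      rw [e1, e2, sD_add, sD_al n (n-2) (n-2) (by omega), sD_al n (n-2) n (by omega)]
      have a1 : aD n (n-2) (n-2) = 2 := by rw [aD, if_pos (by omega)]
      have a2 : aD n n (n-2) = -1 := by rw [aD, if_neg (by omega), if_pos (by omega)]
      rw [a1, a2]
      module
  have hstart : w (n-2+1) = al n (n-2) + al n n := by
    rw [hwdef]; beta_reduce; rw [if_neg (by omega)]
  have := descend n (n-2) w hw (n-2) 1 (by omega) (by omega)
  rw [hstart] at this
  rw [this]
  rw [hwdef]; beta_reduce; rw [if_pos (by omega)]

lemma caseE (n : ℕ) (hn : 4 ≤ n) :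
    blkD n 1 (n-2) (-(al n n)) = -((∑ t ∈ Icc 1 (n-2), al n t) + al n n) := by
  set w : ℕ → Fin (n+1) → ℤ := fun k =>
    -((∑ t ∈ Icc k (n-2), al n t) + al n n) with hwdef
  have hw : ∀ k, 1 ≤ k → k ≤ n-2 → sD n k (w (k+1)) = w k := by
    intro k hk1 hk2
    rw [hwdef]
    simp only
    rw [sD_neg, sD_add, sD_al n k n (by omega), sD_Icc n k (k+1) (n-2) (by omega)]
    rcases Nat.lt_or_ge k (n-2) with hk3 | hk3
    · have a1 : aD n n k = 0 := by rw [aD, if_neg (by omega), if_neg (by omega)]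
      rw [a1, sum_aD n k (n-2) hn hk1 (by omega) (by omega)]
      rw [Icc_ins k (n-2) (by omega), Finset.sum_insert (by simp)]
      module
    · have hke : k = n-2 := by omega
      subst hke
      have a1 : aD n n (n-2) = -1 := by rw [aD, if_neg (by omega), if_pos (by omega)]
      rw [a1]
      have he : Finset.Icc (n-2+1) (n-2) = ∅ := Finset.Icc_eq_empty (by omega)
      simp only [he, Finset.sum_empty, Finset.Icc_self, Finset.sum_singleton]
      module
  have hstart : w (n-2+1) = -(al n n) := by
    rw [hwdef]
    simp only
    rw [Finset.Icc_eq_empty (by omega), Finset.sum_empty, zero_add]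
  have := descend n (n-2) w hw (n-2) 1 (by omega) (by omega)
  rw [hstart] at this
  rw [this]

/-- Action of `u = π₁ ∘ [1,n−2] ∘ sₙ` on the simple roots of type `D_n^{(1)}`. -/
theorem statement10 (n : ℕ) (hn : 4 ≤ n) :
    (pi1 n ∘ blkD n 1 (n - 2) ∘ sD n n) (al n 0) = al n 0 + al n 1 + al n 2
    ∧ (∀ j, 1 ≤ j → j ≤ n - 3 →
        (pi1 n ∘ blkD n 1 (n - 2) ∘ sD n n) (al n j) = al n (j + 1))
    ∧ (pi1 n ∘ blkD n 1 (n - 2) ∘ sD n n) (al n (n - 1))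
        = al n 0 + (∑ j ∈ Icc 2 (n - 2), al n j) + al n (n - 1)
    ∧ (pi1 n ∘ blkD n 1 (n - 2) ∘ sD n n) (al n (n - 2)) = al n n
    ∧ (pi1 n ∘ blkD n 1 (n - 2) ∘ sD n n) (al n n)
        = -(al n 0 + (∑ j ∈ Icc 2 (n - 2), al n j) + al n n) := by
  have hIcc1 : ∀ b:ℕ, 2 ≤ b → (∑ t ∈ Icc 1 b, al n t) = al n 1 + ∑ t ∈ Icc 2 b, al n t := by
    intro b hb
    rw [Icc_ins 1 b (by omega), Finset.sum_insert (by simp)]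
  refine ⟨?_, ?_, ?_, ?_, ?_⟩
  · -- case A
    have hs : sD n n (al n 0) = al n 0 := by
      rw [sD_al n n 0 (by omega)]
      have a1 : aD n 0 n = 0 := by rw [aD, if_neg (by omega), if_neg (by omega)]
      rw [a1]; simp
    simp only [Function.comp_apply, hs, caseA n hn]
    rw [pi1_add, pi1_add, pi1_al0 n (by omega), pi1_al1 n (by omega), pi1_al2 n 2 (by omega)]
    abel
  · -- case B
    intro j hj1 hj2
    have hs : sD n n (al n j) = al n j := by
      rw [sD_al n n j (by omega)]
      have a1 : aD n j n = 0 := by rw [aD, if_neg (by omega), if_neg (by omega)]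
      rw [a1]; simp
    simp only [Function.comp_apply, hs, caseB n j hn hj1 hj2]
    exact pi1_al2 n (j+1) (by omega)
  · -- case C
    have hs : sD n n (al n (n-1)) = al n (n-1) := by
      rw [sD_al n n (n-1) (by omega)]
      have a1 : aD n (n-1) n = 0 := by rw [aD, if_neg (by omega), if_neg (by omega)]
      rw [a1]; simp
    simp only [Function.comp_apply, hs, caseC n hn]
    have hsplit : (∑ t ∈ Icc 1 (n-1), al n t)
        = al n 1 + ((∑ t ∈ Icc 2 (n-2), al n t) + al n (n-1)) := by
      rw [hIcc1 (n-1) (by omega)]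
      rw [show n-1 = n-2+1 by omega, Finset.sum_Icc_succ_top (by omega)]
    rw [hsplit, pi1_add, pi1_al1 n (by omega), pi1_add, pi1_S2,
      pi1_al2 n (n-1) (by omega)]
    abel
  · -- case D
    have hs : sD n n (al n (n-2)) = al n (n-2) + al n n := by
      rw [sD_al n n (n-2) (by omega)]
      have a1 : aD n (n-2) n = -1 := by rw [aD, if_neg (by omega), if_pos (by omega)]
      rw [a1]; module
    simp only [Function.comp_apply, hs, caseD n hn]
    exact pi1_al2 n n (by omega)
  · -- case E
    have hs : sD n n (al n n) = -(al n n) := by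
      rw [sD_al n n n (by omega)]
      have a1 : aD n n n = 2 := by rw [aD, if_pos (by omega)]
      rw [a1]
      module
    simp only [Function.comp_apply, hs, caseE n hn]
    rw [hIcc1 (n-2) (by omega), pi1_neg, pi1_add, pi1_add, pi1_al1 n (by omega),
      pi1_S2, pi1_al2 n n (by omega)]
    try abel

end
end

section
/- Let n ≥ 2. For 0 ≤ k ≤ n−1 define vectors in the affine root lattice of type C_n^{(1)}: α̃_k = α_k for 1 ≤ k ≤ n−1 and α̃_0 = α_0 + α_1 + ⋯ + α_n. Then for all 1 ≤ i ≤ n−1 and 1 ≤ k ≤ n−1: (s_0 ∘ s_1 ∘ ⋯ ∘ s_n)^i (α_k) = α̃_{(i+k) mod n}, where the residue (i+k) mod n is taken in {0, 1, …, n−1}. -/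
noncomputable section

open Finset

/-- The affine Cartan matrix of type `C_n^{(1)}`: `a_{jj} = 2`; `a_{jk} = a_{kj} = −1`
for the adjacent pairs `{j,j+1}` with `1 ≤ j ≤ n−2`; `a_{0,1} = −2` and `a_{1,0} = −1`;
`a_{n−1,n} = −1` and `a_{n,n−1} = −2`; all other entries are `0`. -/
def aC (n j k : ℕ) : ℤ :=
  if j = k then 2
  else if j = 0 ∧ k = 1 then -2
  else if j = 1 ∧ k = 0 then -1
  else if j = n - 1 ∧ k = n then -1
  else if j = n ∧ k = n - 1 then -2
  else if (1 ≤ j ∧ j ≤ n - 2 ∧ k = j + 1) ∨ (1 ≤ k ∧ k ≤ n - 2 ∧ j = k + 1) then -1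
  else 0

/-- The simple reflection `s_i` on the affine root lattice of type `C_n^{(1)}`:
the ℤ-linear map determined by `s_i(α_j) = α_j − a_{ji} α_i`. -/
def sC (n i : ℕ) (x : Fin (n + 1) → ℤ) : Fin (n + 1) → ℤ :=
  fun m => x m - (∑ j : Fin (n + 1), aC n (j : ℕ) i * x j) * (if (m : ℕ) = i then 1 else 0)

/-- The composite `s₀ ∘ s₁ ∘ ⋯ ∘ sₙ` (rightmost factor applied first). -/
def fullC (n : ℕ) : (Fin (n + 1) → ℤ) → (Fin (n + 1) → ℤ) :=
  (List.range' 0 (n + 1)).foldr (fun j f => sC n j ∘ f) id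

/-- The vectors `α̃_k` (for `0 ≤ k ≤ n−1`): `α̃_k = α_k` for `1 ≤ k ≤ n−1` and
`α̃₀ = α₀ + α₁ + ⋯ + αₙ`. -/
def atilC (n k : ℕ) : Fin (n + 1) → ℤ :=
  if k = 0 then ∑ j ∈ Finset.range (n + 1), al n j else al n k

namespace Aux14

/-! ### basic vectors as ℕ-indexed coefficient functions -/

def ind (k : ℕ) : ℕ → ℤ := fun j => if j = k then 1 else 0
def pS (t : ℕ) : ℕ → ℤ := fun j => if t ≤ j then 1 else 0
def qS (t : ℕ) : ℕ → ℤ := fun j => if j ≤ t then 1 else 0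
def dS (k : ℕ) : ℕ → ℤ := fun j => if j = k ∨ j = k + 1 then 1 else 0

def vec (n : ℕ) (g : ℕ → ℤ) : Fin (n + 1) → ℤ := fun m => g (m : ℕ)

lemma al_eq (n k : ℕ) : al n k = vec n (ind k) := rfl

/-! ### Cartan matrix values -/

lemma aC_diag (n j : ℕ) : aC n j j = 2 := by simp [aC]

lemma aC_far (n j k : ℕ) (h : j + 2 ≤ k ∨ k + 2 ≤ j) : aC n j k = 0 := by
  unfold aC; split_ifs <;> first | rfl | omega | simp_all

lemma aC_right (n j : ℕ) (h1 : 1 ≤ j) (h2 : j + 1 ≤ n - 1) : aC n j (j + 1) = -1 := by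
  unfold aC; split_ifs <;> first | rfl | omega | simp_all

lemma aC_left (n j : ℕ) (h1 : 1 ≤ j) (h2 : j + 1 ≤ n - 1) : aC n (j + 1) j = -1 := by
  unfold aC; split_ifs <;> first | rfl | omega | simp_all

lemma aC_top (m : ℕ) : aC (m + 2) (m + 1) (m + 2) = -1 := by
  unfold aC; split_ifs <;> first | rfl | omega | simp_all

lemma aC_top' (m : ℕ) : aC (m + 2) (m + 2) (m + 1) = -2 := by
  unfold aC; split_ifs <;> first | rfl | omega | simp_all

lemma aC_01 (n : ℕ) : aC n 0 1 = -2 := by unfold aC; split_ifs <;> first | rfl | omega | simp_all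

lemma aC_10 (n : ℕ) : aC n 1 0 = -1 := by unfold aC; split_ifs <;> first | rfl | omega | simp_all

/-! ### sums with small support -/

lemma sum_supp3 (n i : ℕ) (h1 : 1 ≤ i) (h2 : i + 1 ≤ n) (F : ℕ → ℤ)
    (h0 : ∀ j, j ≤ n → (j + 2 ≤ i ∨ i + 2 ≤ j) → F j = 0) :
    ∑ j ∈ range (n + 1), F j = F (i - 1) + F i + F (i + 1) := by
  rw [← Finset.sum_subset (s₁ := ({i - 1, i, i + 1} : Finset ℕ))
      (by intro x hx; simp only [Finset.mem_insert, Finset.mem_singleton] at hx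
          simp only [Finset.mem_range]; omega)
      (by intro x hx hnx
          simp only [Finset.mem_range] at hx
          simp only [Finset.mem_insert, Finset.mem_singleton] at hnx
          exact h0 x (by omega) (by omega))]
  rw [Finset.sum_insert (by simp only [Finset.mem_insert, Finset.mem_singleton]; omega),
      Finset.sum_insert (by simp only [Finset.mem_singleton]; omega),
      Finset.sum_singleton]
  ring

lemma sum_supp_low (n : ℕ) (hn : 1 ≤ n) (F : ℕ → ℤ)
    (h0 : ∀ j, j ≤ n → 2 ≤ j → F j = 0) :
    ∑ j ∈ range (n + 1), F j = F 0 + F 1 := by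
  rw [← Finset.sum_subset (s₁ := ({0, 1} : Finset ℕ))
      (by intro x hx; simp only [Finset.mem_insert, Finset.mem_singleton] at hx
          simp only [Finset.mem_range]; omega)
      (by intro x hx hnx
          simp only [Finset.mem_range] at hx
          simp only [Finset.mem_insert, Finset.mem_singleton] at hnx
          exact h0 x (by omega) (by omega))]
  rw [Finset.sum_insert (by simp), Finset.sum_singleton]

lemma sum_supp_high (n : ℕ) (hn : 1 ≤ n) (F : ℕ → ℤ)
    (h0 : ∀ j, j ≤ n → j + 2 ≤ n → F j = 0) :
    ∑ j ∈ range (n + 1), F j = F (n - 1) + F n := by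
  rw [← Finset.sum_subset (s₁ := ({n - 1, n} : Finset ℕ))
      (by intro x hx; simp only [Finset.mem_insert, Finset.mem_singleton] at hx
          simp only [Finset.mem_range]; omega)
      (by intro x hx hnx
          simp only [Finset.mem_range] at hx
          simp only [Finset.mem_insert, Finset.mem_singleton] at hnx
          exact h0 x (by omega) (by omega))]
  rw [Finset.sum_insert (by simp only [Finset.mem_singleton]; omega), Finset.sum_singleton]

lemma sum_al (n i k : ℕ) (hk : k ≤ n) :
    ∑ j ∈ range (n + 1), aC n j i * ind k j = aC n k i := by
  simp only [ind, mul_ite, mul_one, mul_zero]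
  rw [Finset.sum_ite_eq' (range (n + 1)) k (fun j => aC n j i)]
  rw [if_pos (Finset.mem_range.mpr (by omega))]

/-! ### the workhorse: computing one reflection -/

lemma sC_spec (n i : ℕ) (g g' : ℕ → ℤ) (c : ℤ)
    (hc : ∑ j ∈ range (n + 1), aC n j i * g j = c)
    (hg : ∀ m, m ≤ n → g m - c * (if m = i then 1 else 0) = g' m) :
    sC n i (vec n g) = vec n g' := by
  funext m
  show g (m : ℕ) - (∑ j : Fin (n + 1), aC n (j : ℕ) i * g (j : ℕ)) *
      (if (m : ℕ) = i then 1 else 0) = g' (m : ℕ)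
  rw [Fin.sum_univ_eq_sum_range (fun j => aC n j i * g j) (n + 1), hc]
  exact hg m (Nat.lt_succ_iff.mp m.2)

/-! ### partial composites -/

def Tc (n j : ℕ) : (Fin (n + 1) → ℤ) → (Fin (n + 1) → ℤ) :=
  (List.range' 0 j).foldr (fun i f => sC n i ∘ f) id

lemma fullC_eq (n : ℕ) : fullC n = Tc n (n + 1) := rfl

lemma foldr_comp (n : ℕ) (l : List ℕ) (init : (Fin (n + 1) → ℤ) → (Fin (n + 1) → ℤ)) :
    l.foldr (fun i f => sC n i ∘ f) init = (l.foldr (fun i f => sC n i ∘ f) id) ∘ init := by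
  induction l with
  | nil => rfl
  | cons a l ih => simp only [List.foldr_cons, ih]; rfl

lemma Tc_succ (n j : ℕ) (x : Fin (n + 1) → ℤ) : Tc n (j + 1) x = Tc n j (sC n j x) := by
  show ((List.range' 0 (j + 1)).foldr (fun i f => sC n i ∘ f) id) x = _
  rw [List.range'_concat, List.foldr_append, foldr_comp]
  simp only [List.foldr_cons, List.foldr_nil, Nat.zero_add, Nat.one_mul]
  rfl

lemma Tc_fix (n : ℕ) (x : Fin (n + 1) → ℤ) :
    ∀ j, (∀ i, i < j → sC n i x = x) → Tc n j x = x := by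
  intro j
  induction j with
  | zero => intro _; rfl
  | succ j ih =>
    intro h
    rw [Tc_succ, h j (by omega)]
    exact ih (fun i hi => h i (by omega))

lemma Tc_drop (n : ℕ) (x : Fin (n + 1) → ℤ) :
    ∀ j' j, j ≤ j' → (∀ i, j ≤ i → i < j' → sC n i x = x) → Tc n j' x = Tc n j x := by
  intro j'
  induction j' with
  | zero =>
    intro j hj _
    have : j = 0 := by omega
    rw [this]
  | succ j' ih =>
    intro j hj h
    rcases Nat.eq_or_lt_of_le hj with heq | hlt
    · rw [heq]
    · rw [Tc_succ, h j' (by omega) (by omega)]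
      exact ih j (by omega) (fun i h1 h2 => h i h1 (by omega))

/-! ### individual reflection computations -/

lemma step_far (n k i : ℕ) (hk : k ≤ n) (h : k + 2 ≤ i ∨ i + 2 ≤ k) :
    sC n i (vec n (ind k)) = vec n (ind k) := by
  apply sC_spec n i _ _ 0
  · rw [sum_al n i k hk, aC_far n k i h]
  · intro m _; ring

lemma step_I2 (n k : ℕ) (h1 : 1 ≤ k) (h2 : k + 1 ≤ n - 1) :
    sC n (k + 1) (vec n (ind k)) = vec n (dS k) := by
  apply sC_spec n (k + 1) _ _ (-1)
  · rw [sum_al n (k + 1) k (by omega), aC_right n k h1 h2]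
  · intro m _; simp only [ind, dS]; split_ifs <;> omega

lemma step_I3 (n k : ℕ) (h1 : 1 ≤ k) (h2 : k + 1 ≤ n - 1) :
    sC n k (vec n (dS k)) = vec n (ind (k + 1)) := by
  apply sC_spec n k _ _ 1
  · rw [sum_supp3 n k h1 (by omega) _
      (fun j hj hfar => by rw [aC_far n j k hfar]; ring)]
    have e1 : dS k (k - 1) = 0 := by simp only [dS]; split_ifs <;> first | rfl | omega | simp_all
    have e2 : dS k k = 1 := by simp only [dS]; split_ifs <;> first | rfl | omega | simp_all
    have e3 : dS k (k + 1) = 1 := by simp only [dS]; split_ifs <;> first | rfl | omega | simp_all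
    rw [e1, e2, e3, aC_diag, aC_left n k h1 h2]
    ring
  · intro m _; simp only [dS, ind]; split_ifs <;> omega

lemma step_II1 (m : ℕ) :
    sC (m + 2) (m + 2) (vec (m + 2) (ind (m + 1))) = vec (m + 2) (pS (m + 1)) := by
  apply sC_spec (m + 2) (m + 2) _ _ (-1)
  · rw [sum_al (m + 2) (m + 2) (m + 1) (by omega), aC_top]
  · intro m' hm'; simp only [ind, pS]; split_ifs <;> omega

lemma step_II2 (m : ℕ) :
    sC (m + 2) (m + 1) (vec (m + 2) (pS (m + 1))) = vec (m + 2) (pS (m + 1)) := by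
  apply sC_spec (m + 2) (m + 1) _ _ 0
  · rw [sum_supp3 (m + 2) (m + 1) (by omega) (by omega) _
      (fun j hj hfar => by rw [aC_far (m + 2) j (m + 1) hfar]; ring)]
    have e1 : pS (m + 1) (m + 1 - 1) = 0 := by simp only [pS]; split_ifs <;> first | rfl | omega | simp_all
    have e2 : pS (m + 1) (m + 1) = 1 := by simp only [pS]; split_ifs <;> first | rfl | omega | simp_all
    have e3 : pS (m + 1) (m + 1 + 1) = 1 := by simp only [pS]; split_ifs <;> first | rfl | omega | simp_all
    rw [e1, e2, e3, aC_diag, show m + 1 + 1 = m + 2 from rfl, aC_top']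
    ring
  · intro m' hm'; ring

lemma step_II3 (n j : ℕ) (h1 : 1 ≤ j) (h2 : j + 1 ≤ n - 1) :
    sC n j (vec n (pS (j + 1))) = vec n (pS j) := by
  apply sC_spec n j _ _ (-1)
  · rw [sum_supp3 n j h1 (by omega) _
      (fun i hi hfar => by rw [aC_far n i j hfar]; ring)]
    have e1 : pS (j + 1) (j - 1) = 0 := by simp only [pS]; split_ifs <;> first | rfl | omega | simp_all
    have e2 : pS (j + 1) j = 0 := by simp only [pS]; split_ifs <;> first | rfl | omega | simp_all
    have e3 : pS (j + 1) (j + 1) = 1 := by simp only [pS]; split_ifs <;> first | rfl | omega | simp_all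
    rw [e1, e2, e3, aC_left n j h1 h2]
    ring
  · intro m' hm'; simp only [pS]; split_ifs <;> first | rfl | omega | simp_all

lemma step_II4 (n : ℕ) (hn : 2 ≤ n) :
    sC n 0 (vec n (pS 1)) = vec n (pS 0) := by
  apply sC_spec n 0 _ _ (-1)
  · rw [sum_supp_low n (by omega) _
      (fun j hj h2j => by rw [aC_far n j 0 (by omega)]; ring)]
    have e1 : pS 1 0 = 0 := by simp only [pS]; split_ifs <;> first | rfl | omega | simp_all
    have e2 : pS 1 1 = 1 := by simp only [pS]; split_ifs <;> first | rfl | omega | simp_all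
    rw [e1, e2, aC_10]
    ring
  · intro m' hm'; simp only [pS]; split_ifs <;> first | rfl | omega | simp_all

lemma step_III1 (m : ℕ) :
    sC (m + 2) (m + 2) (vec (m + 2) (pS 0)) = vec (m + 2) (qS (m + 1)) := by
  apply sC_spec (m + 2) (m + 2) _ _ 1
  · rw [sum_supp_high (m + 2) (by omega) _
      (fun j hj hfar => by rw [aC_far (m + 2) j (m + 2) (by omega)]; ring)]
    have e1 : pS 0 (m + 2 - 1) = 1 := by simp only [pS]; split_ifs <;> first | rfl | omega | simp_all
    have e2 : pS 0 (m + 2) = 1 := by simp only [pS]; split_ifs <;> first | rfl | omega | simp_all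
    rw [e1, e2, aC_diag, show m + 2 - 1 = m + 1 from rfl, aC_top]
    ring
  · intro m' hm'; simp only [pS, qS]; split_ifs <;> omega

lemma step_III2 (n j : ℕ) (h1 : 1 ≤ j) (h2 : j + 1 ≤ n - 1) :
    sC n (j + 1) (vec n (qS (j + 1))) = vec n (qS j) := by
  apply sC_spec n (j + 1) _ _ 1
  · rw [sum_supp3 n (j + 1) (by omega) (by omega) _
      (fun i hi hfar => by rw [aC_far n i (j + 1) hfar]; ring)]
    have e1 : qS (j + 1) (j + 1 - 1) = 1 := by simp only [qS]; split_ifs <;> first | rfl | omega | simp_all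
    have e2 : qS (j + 1) (j + 1) = 1 := by simp only [qS]; split_ifs <;> first | rfl | omega | simp_all
    have e3 : qS (j + 1) (j + 1 + 1) = 0 := by simp only [qS]; split_ifs <;> first | rfl | omega | simp_all
    rw [e1, e2, e3, aC_diag, show j + 1 - 1 = j from rfl, aC_right n j h1 h2]
    ring
  · intro m' hm'; simp only [qS]; split_ifs <;> first | rfl | omega | simp_all

lemma step_III3 (n : ℕ) (hn : 2 ≤ n) :
    sC n 1 (vec n (qS 1)) = vec n (qS 1) := by
  apply sC_spec n 1 _ _ 0
  · rw [sum_supp3 n 1 (by omega) (by omega) _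
      (fun i hi hfar => by rw [aC_far n i 1 hfar]; ring)]
    have e1 : qS 1 (1 - 1) = 1 := by simp only [qS]; split_ifs <;> first | rfl | omega | simp_all
    have e2 : qS 1 1 = 1 := by simp only [qS]; split_ifs <;> first | rfl | omega | simp_all
    have e3 : qS 1 (1 + 1) = 0 := by simp only [qS]; split_ifs <;> first | rfl | omega | simp_all
    rw [e1, e2, e3, aC_diag, aC_01]
    ring
  · intro m' hm'; ring

lemma step_III4 (n : ℕ) (hn : 2 ≤ n) :
    sC n 0 (vec n (qS 1)) = vec n (ind 1) := by
  apply sC_spec n 0 _ _ 1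
  · rw [sum_supp_low n (by omega) _
      (fun j hj h2j => by rw [aC_far n j 0 (by omega)]; ring)]
    have e1 : qS 1 0 = 1 := by simp only [qS]; split_ifs <;> first | rfl | omega | simp_all
    have e2 : qS 1 1 = 1 := by simp only [qS]; split_ifs <;> first | rfl | omega | simp_all
    rw [e1, e2, aC_diag, aC_10]
    ring
  · intro m' hm'; simp only [qS, ind]; split_ifs <;> omega

/-! ### the three cases of the Coxeter-element action -/

lemma caseI (n k : ℕ) (hn : 2 ≤ n) (h1 : 1 ≤ k) (h2 : k ≤ n - 2) :
    fullC n (al n k) = al n (k + 1) := by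
  rw [fullC_eq, al_eq]
  rw [Tc_drop n _ (n + 1) (k + 2) (by omega)
      (fun i hi1 hi2 => step_far n k i (by omega) (by omega))]
  rw [Tc_succ, step_I2 n k h1 (by omega), Tc_succ, step_I3 n k h1 (by omega)]
  rw [Tc_fix n _ k (fun i hi => step_far n (k + 1) i (by omega) (by omega))]
  rfl

lemma caseII (n : ℕ) (hn : 2 ≤ n) : fullC n (al n (n - 1)) = vec n (pS 0) := by
  obtain ⟨m, rfl⟩ : ∃ m, n = m + 2 := ⟨n - 2, by omega⟩
  have claim : ∀ j, 1 ≤ j → j ≤ m + 1 → Tc (m + 2) j (vec (m + 2) (pS j)) = vec (m + 2) (pS 0) := by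
    intro j
    induction j with
    | zero => omega
    | succ j ih =>
      intro _ hj
      rcases Nat.eq_zero_or_pos j with h0 | hpos
      · subst h0
        rw [Tc_succ, step_II4 (m + 2) (by omega)]
        rfl
      · rw [Tc_succ, step_II3 (m + 2) j hpos (by omega)]
        exact ih hpos (by omega)
  rw [fullC_eq, al_eq]
  rw [show m + 2 - 1 = m + 1 from rfl]
  rw [Tc_succ, step_II1 m, Tc_succ, step_II2 m]
  exact claim (m + 1) (by omega) (by omega)

lemma caseIII (n : ℕ) (hn : 2 ≤ n) : fullC n (vec n (pS 0)) = al n 1 := by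
  obtain ⟨m, rfl⟩ : ∃ m, n = m + 2 := ⟨n - 2, by omega⟩
  have claim : ∀ j, 1 ≤ j → j ≤ m + 1 →
      Tc (m + 2) (j + 1) (vec (m + 2) (qS j)) = vec (m + 2) (ind 1) := by
    intro j
    induction j with
    | zero => omega
    | succ j ih =>
      intro _ hj
      rcases Nat.eq_zero_or_pos j with h0 | hpos
      · subst h0
        rw [Tc_succ, step_III3 (m + 2) (by omega), Tc_succ, step_III4 (m + 2) (by omega)]
        rfl
      · rw [Tc_succ, step_III2 (m + 2) j hpos (by omega)]
        exact ih hpos (by omega)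
  rw [fullC_eq, al_eq]
  rw [Tc_succ, step_III1 m]
  exact claim (m + 1) (by omega) (by omega)

/-! ### translating `atilC` -/

lemma atil0 (n : ℕ) : atilC n 0 = vec n (pS 0) := by
  unfold atilC
  rw [if_pos rfl]
  funext m
  rw [Finset.sum_apply]
  show (∑ j ∈ range (n + 1), if (m : ℕ) = j then (1 : ℤ) else 0) = _
  rw [Finset.sum_ite_eq (range (n + 1)) (m : ℕ) (fun _ => (1 : ℤ)),
      if_pos (Finset.mem_range.mpr m.2)]
  show _ = if 0 ≤ (m : ℕ) then (1 : ℤ) else 0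
  rw [if_pos (Nat.zero_le _)]

lemma atil_pos (n k : ℕ) (hk : 1 ≤ k) : atilC n k = al n k := by
  unfold atilC
  rw [if_neg (by omega)]

lemma fullC_atil (n : ℕ) (hn : 2 ≤ n) (m : ℕ) (hm : m < n) :
    fullC n (atilC n m) = atilC n ((m + 1) % n) := by
  rcases Nat.eq_zero_or_pos m with h0 | hpos
  · subst h0
    rw [atil0, caseIII n hn, Nat.mod_eq_of_lt (by omega), atil_pos n 1 (by omega)]
  · rcases Nat.lt_or_ge m (n - 1) with hlt | hge
    · rw [atil_pos n m hpos, caseI n m hn hpos (by omega),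
        Nat.mod_eq_of_lt (by omega), atil_pos n (m + 1) (by omega)]
    · have hm1 : m = n - 1 := by omega
      subst hm1
      rw [atil_pos n (n - 1) (by omega), caseII n hn,
        show (n - 1 + 1) % n = 0 by rw [Nat.sub_add_cancel (by omega), Nat.mod_self],
        atil0]

lemma iter_atil (n : ℕ) (hn : 2 ≤ n) :
    ∀ i m, m < n → (fullC n)^[i] (atilC n m) = atilC n ((i + m) % n) := by
  intro i
  induction i with
  | zero => intro m hm; simp [Nat.mod_eq_of_lt hm]
  | succ i ih =>
    intro m hm
    rw [Function.iterate_succ_apply, fullC_atil n hn m hm,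
      ih _ (Nat.mod_lt _ (by omega))]
    have : (i + (m + 1) % n) % n = (i + 1 + m) % n := by
      rw [Nat.add_mod_mod, show i + (m + 1) = i + 1 + m from by omega]
    rw [this]

end Aux14

/-- In type `C_n^{(1)}`, `(s₀ ∘ s₁ ∘ ⋯ ∘ sₙ)^i (α_k) = α̃_{(i+k) mod n}` for all
`1 ≤ i ≤ n−1` and `1 ≤ k ≤ n−1`. -/
theorem statement14 (n : ℕ) (hn : 2 ≤ n) :
    ∀ i k, 1 ≤ i → i ≤ n - 1 → 1 ≤ k → k ≤ n - 1 →
      (fullC n)^[i] (al n k) = atilC n ((i + k) % n) := by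
  intro i k _ _ hk1 hk2
  have h := Aux14.iter_atil n hn i k (by omega)
  rwa [Aux14.atil_pos n k hk1] at h


end
end
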